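/- arXiv:2506.09711 — 3 statements merged into one kernel-verified Lean document; each statement's English description precedes it below -/
import Mathlib

section
/- Let $\|\cdot\|$ be a norm on $\mathbb{R}^p$, let $f: \mathbb{R}^p \to \mathbb{R}$ be convex, differentiable, and $L$-smooth with respect to $\|\cdot\|$ (meaning $\|\nabla f(x) - \nabla f(y)\|_* \le L\|x-y\|$ for all $x, y$), and let $x_\star$ be a global minimizer of $f$. Then for any $x \ne x_\star$, $\inf_{y} \{ f(y) + \frac{L}{2}\|x - y\|^2 \} \le f(x) - \frac{[f(x) - f(x_\star)]^2}{2L\|x - x_\star\|^2}$. -/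
/-!
Write `Δ = f x - f x⋆` and `N = ‖x - x⋆‖`. Testing the infimum at `y = x + t (x⋆ - x)` with
`t ∈ [0, 1]`, convexity bounds `f y` by the chord, so the infimum is at most
`f x - t Δ + L t² N² / 2`. The minimising step `t = Δ / (L N²)` gives the claim, and it is
admissible because `∇f x⋆ = 0`, so that convexity and smoothness give
`Δ ≤ ⟪∇f x - ∇f x⋆, x - x⋆⟫ ≤ ‖∇f x - ∇f x⋆‖_* N ≤ L N²`.
-/

open scoped RealInnerProductSpace

/-- Dual norm (with respect to the Euclidean inner product) of a norm `ν`. -/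
noncomputable def dualNorm {p : ℕ} (ν : EuclideanSpace ℝ (Fin p) → ℝ)
    (x : EuclideanSpace ℝ (Fin p)) : ℝ :=
  sSup {t : ℝ | ∃ z, ν z ≤ 1 ∧ t = (inner ℝ x z : ℝ)}

theorem ConvexOn.add_fderiv_sub_le {E : Type*} [NormedAddCommGroup E] [NormedSpace ℝ E]
    {s : Set E} {f : E → ℝ} {f' : E →L[ℝ] ℝ} {a b : E} (hf : ConvexOn ℝ s f) (ha : a ∈ s)
    (hb : b ∈ s) (hd : HasFDerivAt f f' a) : f a + f' (b - a) ≤ f b := by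
  let g : ℝ →ᵃ[ℝ] E := AffineMap.lineMap a b
  have hline : ConvexOn ℝ (g ⁻¹' s) (f ∘ g) := hf.comp_affineMap g
  have hderiv : HasDerivAt (f ∘ g) (f' (b - a)) 0 :=
    (by simpa [g] using hd : HasFDerivAt f f' (g 0)).comp_hasDerivAt _
      AffineMap.hasDerivAt_lineMap
  have hslope := hline.le_slope_of_hasDerivAt (by simpa [g]) (by simpa [g]) one_pos hderiv
  simp only [slope_def_field, Function.comp_apply, g, AffineMap.lineMap_apply_zero,
    AffineMap.lineMap_apply_one, sub_zero, div_one] at hslope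
  linarith

theorem Seminorm.exists_pos_mul_norm_le {E : Type*} [NormedAddCommGroup E] [NormedSpace ℝ E]
    [FiniteDimensional ℝ E] (q : Seminorm ℝ E) (hq : ∀ z, q z = 0 → z = 0) :
    ∃ m > 0, ∀ z, m * ‖z‖ ≤ q z := by
  rcases subsingleton_or_nontrivial E with _ | _
  · exact ⟨1, one_pos, fun z => by simp [Subsingleton.elim z 0]⟩
  obtain ⟨z₀, hz₀, hmin⟩ := (isCompact_sphere (0 : E) 1).exists_isMinOn
    (NormedSpace.sphere_nonempty.2 zero_le_one) q.convexOn.locallyLipschitz.continuous.continuousOn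
  have hz₀ne : z₀ ≠ 0 := ne_zero_of_mem_unit_sphere ⟨z₀, hz₀⟩
  refine ⟨q z₀, (apply_nonneg q z₀).lt_of_ne fun h => hz₀ne (hq z₀ h.symm), fun z => ?_⟩
  rcases eq_or_ne z 0 with rfl | hz
  · simp
  have hnorm : 0 < ‖z‖ := norm_pos_iff.2 hz
  have hunit : ‖z‖⁻¹ • z ∈ Metric.sphere (0 : E) 1 := by
    simp [norm_smul, hnorm.ne']
  calc q z₀ * ‖z‖ ≤ q (‖z‖⁻¹ • z) * ‖z‖ := by gcongr; exact hmin hunit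
    _ = q z := by rw [map_smul_eq_mul, Real.norm_eq_abs, abs_inv, abs_norm]; field_simp

theorem inner_le_dualNorm_mul {p : ℕ} (q : Seminorm ℝ (EuclideanSpace ℝ (Fin p)))
    (hq : ∀ z, q z = 0 → z = 0) (u z : EuclideanSpace ℝ (Fin p)) :
    ⟪u, z⟫ ≤ dualNorm q u * q z := by
  obtain ⟨m, hm, hmq⟩ := q.exists_pos_mul_norm_le hq
  have hbdd : BddAbove {t : ℝ | ∃ w, q w ≤ 1 ∧ t = ⟪u, w⟫} := by
    refine ⟨‖u‖ / m, ?_⟩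
    rintro _ ⟨w, hw, rfl⟩
    have hw' : ‖w‖ ≤ 1 / m := by rw [le_div_iff₀ hm]; linarith [hmq w]
    calc ⟪u, w⟫ ≤ ‖u‖ * ‖w‖ := real_inner_le_norm u w
      _ ≤ ‖u‖ * (1 / m) := by gcongr
      _ = ‖u‖ / m := by ring
  rcases (apply_nonneg q z).eq_or_lt with hz | hz
  · simp [hq z hz.symm]
  have hunit : ⟪u, (q z)⁻¹ • z⟫ ≤ dualNorm q u := by
    refine le_csSup hbdd ⟨_, ?_, rfl⟩
    rw [map_smul_eq_mul, Real.norm_eq_abs, abs_inv, abs_of_pos hz, inv_mul_cancel₀ hz.ne']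
  rw [real_inner_smul_right] at hunit
  calc ⟪u, z⟫ = (q z)⁻¹ * ⟪u, z⟫ * q z := by field_simp
    _ ≤ dualNorm q u * q z := by gcongr

theorem sub_le_mul_sq_of_dualNorm_lipschitz {p : ℕ} (q : Seminorm ℝ (EuclideanSpace ℝ (Fin p)))
    (hq : ∀ z, q z = 0 → z = 0) {f : EuclideanSpace ℝ (Fin p) → ℝ}
    {f' : EuclideanSpace ℝ (Fin p) → EuclideanSpace ℝ (Fin p)}
    (hgrad : ∀ x, HasGradientAt f (f' x) x) (hconv : ConvexOn ℝ Set.univ f) {L : ℝ}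
    (hsmooth : ∀ x y, dualNorm q (f' x - f' y) ≤ L * q (x - y))
    {xstar : EuclideanSpace ℝ (Fin p)} (hcrit : f' xstar = 0) (x : EuclideanSpace ℝ (Fin p)) :
    f x - f xstar ≤ L * q (x - xstar) ^ 2 := by
  have hfirst : f x + ⟪f' x, xstar - x⟫ ≤ f xstar := by
    simpa using hconv.add_fderiv_sub_le trivial trivial (hgrad x).hasFDerivAt
  have hpair := inner_le_dualNorm_mul q hq (f' x) (x - xstar)
  have hlip := hsmooth x xstar
  rw [hcrit, sub_zero] at hlip
  calc f x - f xstar ≤ ⟪f' x, x - xstar⟫ := by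
        rw [← neg_sub xstar x, inner_neg_right]; linarith
    _ ≤ dualNorm q (f' x) * q (x - xstar) := hpair
    _ ≤ L * q (x - xstar) * q (x - xstar) := by gcongr
    _ = L * q (x - xstar) ^ 2 := by ring

theorem sInf_add_sq_le_of_convexOn {E : Type*} [AddCommGroup E] [Module ℝ E] (q : Seminorm ℝ E)
    {f : E → ℝ} (hconv : ConvexOn ℝ Set.univ f) (hbdd : BddBelow (Set.range f)) {L : ℝ}
    (hL : 0 ≤ L) (x xstar : E) {t : ℝ} (ht₀ : 0 ≤ t) (ht₁ : t ≤ 1) :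
    sInf {v : ℝ | ∃ y, v = f y + L / 2 * q (x - y) ^ 2} ≤
      (1 - t) * f x + t * f xstar + L / 2 * (t * q (x - xstar)) ^ 2 := by
  obtain ⟨c, hc⟩ := hbdd
  have hbdd' : BddBelow {v : ℝ | ∃ y, v = f y + L / 2 * q (x - y) ^ 2} := by
    refine ⟨c, ?_⟩
    rintro _ ⟨y, rfl⟩
    have hfy : c ≤ f y := hc ⟨y, rfl⟩
    have hpen : 0 ≤ L / 2 * q (x - y) ^ 2 := by positivity
    linarith
  set y := (1 - t) • x + t • xstar
  have hfy : f y ≤ (1 - t) * f x + t * f xstar :=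
    hconv.2 trivial trivial (by linarith) ht₀ (by ring)
  have hxy : q (x - y) = t * q (x - xstar) := by
    rw [show x - y = t • (x - xstar) by module, map_smul_eq_mul, Real.norm_of_nonneg ht₀]
  calc sInf {v : ℝ | ∃ y, v = f y + L / 2 * q (x - y) ^ 2}
      ≤ f y + L / 2 * q (x - y) ^ 2 := csInf_le hbdd' ⟨y, rfl⟩
    _ ≤ (1 - t) * f x + t * f xstar + L / 2 * (t * q (x - xstar)) ^ 2 := by rw [hxy]; gcongr

theorem stmt6_general {p : ℕ} (ν : EuclideanSpace ℝ (Fin p) → ℝ)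
    (hhom : ∀ (c : ℝ) y, ν (c • y) = |c| * ν y)
    (htri : ∀ y z, ν (y + z) ≤ ν y + ν z)
    (hdef : ∀ y, ν y = 0 → y = 0)
    (f : EuclideanSpace ℝ (Fin p) → ℝ)
    (f' : EuclideanSpace ℝ (Fin p) → EuclideanSpace ℝ (Fin p))
    (hgrad : ∀ x, HasGradientAt f (f' x) x)
    (hconv : ConvexOn ℝ Set.univ f)
    (L : ℝ) (hL : 0 < L)
    (hsmooth : ∀ x y, dualNorm ν (f' x - f' y) ≤ L * ν (x - y))
    (xstar : EuclideanSpace ℝ (Fin p)) (hmin : ∀ y, f xstar ≤ f y)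
    (x : EuclideanSpace ℝ (Fin p)) (hx : x ≠ xstar) :
    sInf {v : ℝ | ∃ y, v = f y + L / 2 * (ν (x - y)) ^ 2} ≤
      f x - (f x - f xstar) ^ 2 / (2 * L * (ν (x - xstar)) ^ 2) := by
  let q : Seminorm ℝ (EuclideanSpace ℝ (Fin p)) :=
    Seminorm.of ν htri fun c y => by rw [Real.norm_eq_abs]; exact hhom c y
  have hcrit : f' xstar = 0 := by
    simpa using IsLocalMin.hasFDerivAt_eq_zero (Filter.Eventually.of_forall hmin)
      (hgrad xstar).hasFDerivAt
  set N := ν (x - xstar)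
  set Δ := f x - f xstar with hΔ
  have hN : 0 < N := (apply_nonneg q _).lt_of_ne fun h => hx (sub_eq_zero.1 (hdef _ h.symm))
  have hLN : 0 < L * N ^ 2 := by positivity
  have hgap : Δ ≤ L * N ^ 2 :=
    sub_le_mul_sq_of_dualNorm_lipschitz q hdef hgrad hconv hsmooth hcrit x
  calc sInf {v : ℝ | ∃ y, v = f y + L / 2 * (ν (x - y)) ^ 2}
      ≤ (1 - Δ / (L * N ^ 2)) * f x + Δ / (L * N ^ 2) * f xstar
          + L / 2 * (Δ / (L * N ^ 2) * N) ^ 2 :=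
        sInf_add_sq_le_of_convexOn q hconv ⟨f xstar, by rintro _ ⟨y, rfl⟩; exact hmin y⟩ hL.le
          x xstar (div_nonneg (sub_nonneg.2 (hmin x)) hLN.le) ((div_le_one hLN).2 hgap)
    _ = f x - Δ ^ 2 / (2 * L * N ^ 2) := by rw [hΔ]; field_simp; ring

theorem stmt6 {p : ℕ} (ν : EuclideanSpace ℝ (Fin p) → ℝ)
    (hnn : ∀ y, 0 ≤ ν y)
    (hhom : ∀ (c : ℝ) y, ν (c • y) = |c| * ν y)
    (htri : ∀ y z, ν (y + z) ≤ ν y + ν z)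
    (hdef : ∀ y, ν y = 0 → y = 0)
    (f : EuclideanSpace ℝ (Fin p) → ℝ)
    (f' : EuclideanSpace ℝ (Fin p) → EuclideanSpace ℝ (Fin p))
    (hgrad : ∀ x, HasGradientAt f (f' x) x)
    (hconv : ConvexOn ℝ Set.univ f)
    (L : ℝ) (hL : 0 < L)
    (hsmooth : ∀ x y, dualNorm ν (f' x - f' y) ≤ L * ν (x - y))
    (xstar : EuclideanSpace ℝ (Fin p)) (hmin : ∀ y, f xstar ≤ f y)
    (x : EuclideanSpace ℝ (Fin p)) (hx : x ≠ xstar) :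
    sInf {v : ℝ | ∃ y, v = f y + L / 2 * (ν (x - y)) ^ 2} ≤
      f x - (f x - f xstar) ^ 2 / (2 * L * (ν (x - xstar)) ^ 2) :=
  stmt6_general ν hhom htri hdef f f' hgrad hconv L hL hsmooth xstar hmin x hx
end

section
/- Let $a, b > 0$ with $2b < a$, and let $(\epsilon_t)_{t\ge 0}$ be a sequence of reals satisfying $\epsilon_{t+1} \le \epsilon_t - \frac{\epsilon_t^2}{a^2} + b^2$ for all $t \ge 0$. Then for all $t \ge 0$, $\epsilon_t \le (1 - 2b/a)^t \epsilon_0 + ab$. -/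
/-!
Shifting by the fixed point `a * b`, the recursion reads
`ε (t+1) - a b ≤ (1 - 2b/a) (ε t - a b) - (ε t - a b)² / a²`; dropping the square leaves a linear
contraction with nonnegative factor `1 - 2b/a`, which iterates to a geometric bound.
-/

lemma le_pow_mul_of_succ_le_mul {α : Type*} [Semiring α] [PartialOrder α] [IsOrderedRing α]
    {u : ℕ → α} {q : α} (hq : 0 ≤ q) (hu : ∀ t, u (t + 1) ≤ q * u t) (t : ℕ) :
    u t ≤ q ^ t * u 0 := by
  induction t with
  | zero => simp
  | succ t ih =>
    calc u (t + 1) ≤ q * u t := hu t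
      _ ≤ q * (q ^ t * u 0) := mul_le_mul_of_nonneg_left ih hq
      _ = q ^ (t + 1) * u 0 := by rw [pow_succ', mul_assoc]

lemma sub_sq_div_sq_add_sq_sub_mul_eq {a : ℝ} (ha : a ≠ 0) (x b : ℝ) :
    x - x ^ 2 / a ^ 2 + b ^ 2 - a * b = (1 - 2 * b / a) * (x - a * b) - (x - a * b) ^ 2 / a ^ 2 := by
  field_simp
  ring

lemma sub_mul_le_one_sub_div_mul_sub_mul_of_le {a b x y : ℝ} (ha : a ≠ 0) (h : y ≤ x - x ^ 2 / a ^ 2 + b ^ 2) :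
    y - a * b ≤ (1 - 2 * b / a) * (x - a * b) := by
  have hsq : 0 ≤ (x - a * b) ^ 2 / a ^ 2 := by positivity
  linarith [sub_sq_div_sq_add_sq_sub_mul_eq ha x b]

theorem stmt8 (ε : ℕ → ℝ) (a b : ℝ) (ha : 0 < a) (hb : 0 < b) (hba : 2 * b < a)
    (hrec : ∀ t, ε (t + 1) ≤ ε t - (ε t) ^ 2 / a ^ 2 + b ^ 2) :
    ∀ t : ℕ, ε t ≤ (1 - 2 * b / a) ^ t * ε 0 + a * b := by
  intro t
  have hq : 0 ≤ 1 - 2 * b / a := by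
    rw [sub_nonneg, div_le_one ha]
    exact hba.le
  have hshift : ε t - a * b ≤ (1 - 2 * b / a) ^ t * (ε 0 - a * b) :=
    le_pow_mul_of_succ_le_mul (u := fun t => ε t - a * b) hq
      (fun t => sub_mul_le_one_sub_div_mul_sub_mul_of_le ha.ne' (hrec t)) t
  have hpos : 0 ≤ (1 - 2 * b / a) ^ t * (a * b) := by positivity
  linarith [mul_sub ((1 - 2 * b / a) ^ t) (ε 0) (a * b)]
end

section
/- Suppose $X \in \mathbb{R}^{n \times n}$ is positive semidefinite with $\sum_{i=1}^n |X_{ii} - 1| \le \delta$. Then there exists a positive semidefinite matrix $X'$ with $X'_{ii} = 1$ for all $i$ such that for every symmetric matrix $A$, $\mathrm{Tr}[A(X - X')] \le 3\delta \|A\|_\infty$, where $\|A\|_\infty = \max_j \sum_i |A_{ij}|$. -/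
/-!
Rescale `X` to `D X D` with `D = diag (X i i)^(-1/2)`, and put `1` on the diagonal entries that
are zero. By the Cauchy–Schwarz bound `X i j ^ 2 ≤ X i i * X j j`, entry `(i, j)` moves by at
most `|√(X i i X j j) - 1| ≤ |X i i - 1| + |X j j - 1|`. A perturbation `E` with
`|E i j| ≤ e i + e j` changes `Tr[A ·]` by at most `2 (∑ e) ‖A‖_∞` for symmetric `A`, since
row and column sums of `|A|` coincide.
-/

open Finset Matrix

theorem abs_mul_sub_one_le_of_nonneg {u v : ℝ} (hu : 0 ≤ u) (hv : 0 ≤ v) :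
    |u * v - 1| ≤ |u ^ 2 - 1| + |v ^ 2 - 1| := by
  have hu' := abs_nonneg (u ^ 2 - 1)
  have hv' := abs_nonneg (v ^ 2 - 1)
  rw [abs_le]
  constructor
  · rcases le_total u v with h | h
    · nlinarith [neg_abs_le (u ^ 2 - 1), mul_le_mul_of_nonneg_left h hu]
    · nlinarith [neg_abs_le (v ^ 2 - 1), mul_le_mul_of_nonneg_left h hv]
  · nlinarith [le_abs_self (u ^ 2 - 1), le_abs_self (v ^ 2 - 1), sq_nonneg (u - v)]

theorem abs_sub_div_le_abs_sub_one {x s : ℝ} (hx : |x| ≤ s) : |x - x / s| ≤ |s - 1| := by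
  rcases (abs_nonneg x).trans hx |>.eq_or_lt with rfl | hs
  · simp [abs_nonpos_iff.mp hx]
  · calc |x - x / s| = |x| * |s - 1| / s := by
          rw [← abs_of_pos hs, ← abs_mul, ← abs_div, abs_of_pos hs]; congr 1; field_simp
      _ ≤ |s - 1| := by rw [div_le_iff₀ hs, mul_comm]; gcongr

namespace Matrix

variable {ι : Type*} [Fintype ι]

theorem trace_mul_le_of_abs_apply_le {A E : Matrix ι ι ℝ} (hA : A.IsHermitian) {e : ι → ℝ}
    (hE : ∀ i j, |E i j| ≤ e i + e j) :
    (A * E).trace ≤ 2 * (∑ i, e i) * ⨆ j, ∑ i, |A i j| := by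
  set S := ⨆ j, ∑ i, |A i j|
  have he (i : ι) : 0 ≤ e i := by linarith [(abs_nonneg _).trans (hE i i)]
  have hcols : ∑ j, ∑ i, |A i j| * e j ≤ S * ∑ j, e j := calc
    ∑ j, ∑ i, |A i j| * e j = ∑ j, (∑ i, |A i j|) * e j := by simp_rw [sum_mul]
    _ ≤ ∑ j, S * e j := by
      gcongr with j _
      · exact he j
      · exact le_ciSup (f := fun j => ∑ i, |A i j|) (Finite.bddAbove_range _) j
    _ = S * ∑ j, e j := (mul_sum ..).symm
  have hrows : ∑ i, ∑ j, |A i j| * e i ≤ S * ∑ j, e j := by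
    convert hcols using 3 with i _ j _
    rw [← hA.apply, star_trivial]
  calc (A * E).trace = ∑ i, ∑ j, A i j * E j i := by simp [trace, mul_apply]
    _ ≤ ∑ i, ∑ j, (|A i j| * e j + |A i j| * e i) := by
      refine sum_le_sum fun i _ => sum_le_sum fun j _ => ?_
      calc A i j * E j i ≤ |A i j| * |E j i| := abs_mul (A i j) (E j i) ▸ le_abs_self _
        _ ≤ |A i j| * (e j + e i) := by gcongr; exact hE j i
        _ = _ := mul_add ..
    _ = ∑ j, ∑ i, |A i j| * e j + ∑ i, ∑ j, |A i j| * e i := by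
      rw [sum_comm (f := fun j i => |A i j| * e j)]
      simp only [sum_add_distrib]
    _ ≤ 2 * (∑ i, e i) * S := by linarith

variable [DecidableEq ι]

theorem PosSemidef.apply_sq_le_mul_diag {X : Matrix ι ι ℝ} (hX : X.PosSemidef) (i j : ι) :
    X i j ^ 2 ≤ X i i * X j j := by
  have hsymm : X j i = X i j := by simpa using hX.isHermitian.apply i j
  have hquad (t : ℝ) : 0 ≤ X i i * (t * t) + 2 * X i j * t + X j j := by
    have h := hX.dotProduct_mulVec_nonneg (Pi.single i t + Pi.single j 1)
    simp only [star_trivial, mulVec_add, mulVec_single, op_smul_eq_smul, MulOpposite.op_one,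
      one_smul, dotProduct_add, dotProduct_smul, add_dotProduct, single_dotProduct, col_apply,
      hsymm, one_mul, smul_eq_mul] at h
    linarith
  have := discrim_le_zero hquad
  rw [discrim] at this
  nlinarith

/-- Since `(√0)⁻¹ = 0`, rescaling kills the rows and columns with zero diagonal entry (which
vanish anyway for a PSD matrix); the diagonal correction puts `1` back on those entries. -/
noncomputable def normalizeDiag (X : Matrix ι ι ℝ) : Matrix ι ι ℝ :=
  diagonal (fun i => (√(X i i))⁻¹) * X * diagonal (fun i => (√(X i i))⁻¹) +
    diagonal (fun i => if X i i = 0 then 1 else 0)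

theorem normalizeDiag_apply (X : Matrix ι ι ℝ) (i j : ι) :
    normalizeDiag X i j =
      X i j / (√(X i i) * √(X j j)) + if i = j then (if X i i = 0 then 1 else 0) else 0 := by
  simp only [normalizeDiag, add_apply, mul_diagonal, diagonal_mul, diagonal_apply]
  ring_nf

theorem normalizeDiag_apply_self {X : Matrix ι ι ℝ} {i : ι} (h : 0 ≤ X i i) :
    normalizeDiag X i i = 1 := by
  rw [normalizeDiag_apply, if_pos rfl, ← Real.sqrt_mul h, Real.sqrt_mul_self h]
  rcases eq_or_ne (X i i) 0 with h0 | h0 <;> simp [h0]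

theorem normalizeDiag_apply_of_ne (X : Matrix ι ι ℝ) {i j : ι} (h : i ≠ j) :
    normalizeDiag X i j = X i j / (√(X i i) * √(X j j)) := by
  rw [normalizeDiag_apply, if_neg h, add_zero]

theorem posSemidef_normalizeDiag {X : Matrix ι ι ℝ} (hX : X.PosSemidef) :
    (normalizeDiag X).PosSemidef := by
  refine .add ?_ (.diagonal fun i => ?_)
  · simpa using hX.conjTranspose_mul_mul_same (diagonal fun i => (√(X i i))⁻¹)
  · dsimp only; split_ifs <;> norm_num

theorem abs_sub_normalizeDiag_apply_le {X : Matrix ι ι ℝ} (hX : X.PosSemidef)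
    (i j : ι) : |X i j - normalizeDiag X i j| ≤ |X i i - 1| + |X j j - 1| := by
  rcases eq_or_ne i j with rfl | hij
  · rw [normalizeDiag_apply_self hX.diag_nonneg]
    linarith [abs_nonneg (X i i - 1)]
  · have hsq (k : ι) : √(X k k) ^ 2 = X k k := Real.sq_sqrt hX.diag_nonneg
    have hentry : |X i j| ≤ √(X i i) * √(X j j) := by
      rw [← Real.sqrt_mul hX.diag_nonneg]
      exact Real.abs_le_sqrt (hX.apply_sq_le_mul_diag i j)
    rw [normalizeDiag_apply_of_ne X hij]
    calc _ ≤ |√(X i i) * √(X j j) - 1| := abs_sub_div_le_abs_sub_one hentry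
      _ ≤ |X i i - 1| + |X j j - 1| := by
        simpa only [hsq] using abs_mul_sub_one_le_of_nonneg (Real.sqrt_nonneg (X i i))
          (Real.sqrt_nonneg (X j j))

end Matrix

theorem stmt10 {n : ℕ} (X : Matrix (Fin n) (Fin n) ℝ) (δ : ℝ)
    (hX : X.PosSemidef) (hdiag : ∑ i, |X i i - 1| ≤ δ) :
    ∃ X' : Matrix (Fin n) (Fin n) ℝ, X'.PosSemidef ∧ (∀ i, X' i i = 1) ∧
      ∀ A : Matrix (Fin n) (Fin n) ℝ, A.IsHermitian →
        (A * (X - X')).trace ≤ 3 * δ * (⨆ j, ∑ i, |A i j|) := by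
  refine ⟨normalizeDiag X, posSemidef_normalizeDiag hX,
    fun i => normalizeDiag_apply_self hX.diag_nonneg, fun A hA => ?_⟩
  have hδ : 0 ≤ δ := (sum_nonneg fun i _ => abs_nonneg _).trans hdiag
  have hA_norm : 0 ≤ ⨆ j, ∑ i, |A i j| :=
    Real.iSup_nonneg fun j => sum_nonneg fun i _ => abs_nonneg _
  calc (A * (X - normalizeDiag X)).trace ≤ 2 * (∑ i, |X i i - 1|) * ⨆ j, ∑ i, |A i j| :=
        trace_mul_le_of_abs_apply_le hA (abs_sub_normalizeDiag_apply_le hX)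
    _ ≤ 3 * δ * ⨆ j, ∑ i, |A i j| := by gcongr; linarith
end
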